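/- arXiv:2211.16109 — 4 statements merged into one kernel-verified Lean document; each statement's English description precedes it below -/
import Mathlib

section
/- The improper integral P₁(c) = ∫₀¹ dx/√(x(1-x)(1-cx)), for c ∈ ℂ \ ℝ_{≥0}, converges and satisfies the hypergeometric differential equation c(1-c)P'' + (1-2c)P' - (1/4)P = 0. -/
/-!
Pulling the nonnegative real factor `x (1 - x)` out of the power, the integrand becomes
`x^(-1/2) (1 - x)^(-1/2) (1 - c x)^(-1/2)`. Off the cut `[1, ∞)` the powers `(1 - z x)^s` are
bounded on a compact neighbourhood of `c` times `[0, 1]`, so the integrable Beta weight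
`x^(-1/2) (1 - x)^(-1/2)` dominates all `z`-derivatives and one may differentiate under the integral
sign twice. The hypergeometric operator applied to the integrand is then the `x`-derivative of
`-½ √(x (1 - x)) (1 - c x)^(-3/2)`, which vanishes at both endpoints.
-/

open MeasureTheory Metric Set Complex
open scoped Interval

/-- The elliptic period integral `P₁(c) = ∫₀¹ dx / √(x(1-x)(1-cx))` of the Legendre family,
using the (fixed) principal branch of the square root. -/
noncomputable def P1 (c : ℂ) : ℂ :=
  ∫ x in (0:ℝ)..1, ((x : ℂ) * (1 - (x : ℂ)) * (1 - c * (x : ℂ))) ^ (-(1/2 : ℂ))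

theorem ofReal_mul_cpow_of_nonneg {t : ℝ} (ht : 0 ≤ t) (ζ r : ℂ) :
    ((t : ℂ) * ζ) ^ r = (t : ℂ) ^ r * ζ ^ r := by
  rcases eq_or_ne r 0 with rfl | hr
  · simp
  rcases ht.eq_or_lt with rfl | ht
  · simp [zero_cpow hr]
  rcases eq_or_ne ζ 0 with rfl | hζ
  · simp [zero_cpow hr]
  have ht' : (t : ℂ) ≠ 0 := ofReal_ne_zero.mpr ht.ne'
  rw [cpow_def_of_ne_zero (mul_ne_zero ht' hζ), log_ofReal_mul ht hζ, ofReal_log ht.le,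
    add_mul, exp_add, ← cpow_def_of_ne_zero ht', ← cpow_def_of_ne_zero hζ]

theorem cpow_eq_pow_mul_cpow {ζ : ℂ} (hζ : ζ ≠ 0) (n : ℕ) {s t : ℂ} (h : s = n + t) :
    ζ ^ s = ζ ^ n * ζ ^ t := by
  rw [h, cpow_add _ _ hζ, cpow_natCast]

def cutPlane : Set ℂ := (ofReal '' Ici 1)ᶜ

theorem isOpen_cutPlane : IsOpen cutPlane :=
  (isometry_ofReal.isClosedEmbedding.isClosedMap _ isClosed_Ici).isOpen_compl

theorem one_sub_mul_mem_slitPlane {z : ℂ} (hz : z ∈ cutPlane) {x : ℝ}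
    (hx : x ∈ Icc (0:ℝ) 1) :
    1 - z * x ∈ slitPlane := by
  rw [mem_slitPlane_iff]
  by_cases him : z.im = 0
  · have hre : z.re < 1 := by
      by_contra! h
      exact hz ⟨z.re, h, Complex.ext rfl him.symm⟩
    left
    simp only [sub_re, one_re, mul_re, ofReal_re, ofReal_im, mul_zero, sub_zero]
    rcases le_or_gt 0 z.re with h | h <;> nlinarith [hx.1, hx.2]
  · rcases hx.1.eq_or_lt with rfl | hx0
    · simp
    · right
      simpa [him] using hx0.ne'

theorem exists_closedBall_bound_one_sub_mul_cpow {z : ℂ} (hz : z ∈ cutPlane) (s : ℂ) :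
    ∃ ε > 0, closedBall z ε ⊆ cutPlane ∧
      ∃ C, ∀ w ∈ closedBall z ε, ∀ x ∈ Icc (0:ℝ) 1, ‖(1 - w * x) ^ s‖ ≤ C := by
  obtain ⟨ε, hε, hball⟩ := Metric.isOpen_iff.mp isOpen_cutPlane z hz
  have hsub : closedBall z (ε / 2) ⊆ cutPlane :=
    (closedBall_subset_ball (half_lt_self hε)).trans hball
  have hcont : ContinuousOn (fun p : ℂ × ℝ => (1 - p.1 * p.2) ^ s)
      (closedBall z (ε / 2) ×ˢ Icc 0 1) :=
    ContinuousOn.cpow_const (by fun_prop)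
      fun p hp => one_sub_mul_mem_slitPlane (hsub hp.1) hp.2
  obtain ⟨C, hC⟩ :=
    ((isCompact_closedBall _ _).prod isCompact_Icc).exists_bound_of_continuousOn hcont
  exact ⟨ε / 2, half_pos hε, hsub, C, fun w hw x hx => hC (w, x) ⟨hw, hx⟩⟩

theorem continuousOn_one_sub_mul_cpow {z : ℂ} (hz : z ∈ cutPlane) (s : ℂ) :
    ContinuousOn (fun x : ℝ => (1 - z * x) ^ s) (Icc 0 1) :=
  ContinuousOn.cpow_const (by fun_prop) fun _ hx => one_sub_mul_mem_slitPlane hz hx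

theorem intervalIntegrable_mul_one_sub_mul_cpow {w : ℝ → ℂ}
    (hw : IntervalIntegrable w volume 0 1)
    {z : ℂ} (hz : z ∈ cutPlane) (s : ℂ) :
    IntervalIntegrable (fun x => w x * (1 - z * x) ^ s) volume 0 1 :=
  hw.mul_continuousOn (by rw [uIcc_of_le zero_le_one]; exact continuousOn_one_sub_mul_cpow hz s)

theorem hasDerivAt_integral_mul_one_sub_mul_cpow {w : ℝ → ℂ}
    (hw : IntervalIntegrable w volume 0 1) {z : ℂ} (hz : z ∈ cutPlane) (s : ℂ) :
    HasDerivAt (fun z => ∫ x in (0:ℝ)..1, w x * (1 - z * x) ^ s)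
      (-s * ∫ x in (0:ℝ)..1, w x * x * (1 - z * x) ^ (s - 1)) z := by
  obtain ⟨ε, hε, hball, C, hC⟩ := exists_closedBall_bound_one_sub_mul_cpow hz (s - 1)
  have hwx : IntervalIntegrable (fun x => w x * x) volume 0 1 :=
    hw.mul_continuousOn continuous_ofReal.continuousOn
  have hmem : ∀ x ∈ Ι (0:ℝ) 1, x ∈ Icc (0:ℝ) 1 := fun x hx => by
    rw [uIoc_of_le zero_le_one] at hx
    exact Ioc_subset_Icc_self hx
  have key := intervalIntegral.hasDerivAt_integral_of_dominated_loc_of_deriv_le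
    (F' := fun z x => -s * (w x * x * (1 - z * x) ^ (s - 1)))
    (bound := fun x => ‖s‖ * (‖w x‖ * C)) (closedBall_mem_nhds z hε)
    (Filter.eventually_of_mem (isOpen_cutPlane.mem_nhds hz) fun v hv =>
      (intervalIntegrable_iff.mp (intervalIntegrable_mul_one_sub_mul_cpow hw hv s)).1)
    (intervalIntegrable_mul_one_sub_mul_cpow hw hz s)
    ((intervalIntegrable_iff.mp
      ((intervalIntegrable_mul_one_sub_mul_cpow hwx hz (s - 1)).const_mul (-s))).1)
    (Filter.Eventually.of_forall fun x hx v hv => by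
      have hx := hmem x hx
      rw [norm_mul, norm_neg, norm_mul, norm_mul, norm_real, Real.norm_eq_abs, abs_of_nonneg hx.1]
      have hCx := hC v hv x hx
      refine mul_le_mul_of_nonneg_left ?_ (norm_nonneg s)
      calc ‖w x‖ * x * ‖(1 - v * x) ^ (s - 1)‖
          ≤ ‖w x‖ * 1 * C := by gcongr; exact hx.2
        _ = ‖w x‖ * C := by ring)
    ((hw.norm.mul_const C).const_mul ‖s‖)
    (Filter.Eventually.of_forall fun x hx v hv => by
      have h := ((((hasDerivAt_id' v).mul_const (x : ℂ)).const_sub 1).cpow_const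
        (c := s) (one_sub_mul_mem_slitPlane (hball hv) (hmem x hx))).const_mul (w x)
      exact h.congr_deriv (by ring))
  simpa only [intervalIntegral.integral_const_mul] using key.2

noncomputable def betaWeight (x : ℝ) : ℂ :=
  (x : ℂ) ^ (-(1/2 : ℂ)) * (1 - (x : ℂ)) ^ (-(1/2 : ℂ))

theorem intervalIntegrable_betaWeight : IntervalIntegrable betaWeight volume 0 1 := by
  have h := betaIntegral_convergent (u := 1/2) (v := 1/2) (by norm_num) (by norm_num)
  norm_num at h
  exact h

namespace Legendre

noncomputable def integrand (k : ℕ) (z : ℂ) (x : ℝ) : ℂ :=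
  betaWeight x * x ^ k * (1 - z * x) ^ (-(1/2 : ℂ) - k)

noncomputable def integral (k : ℕ) (z : ℂ) : ℂ := ∫ x in (0:ℝ)..1, integrand k z x

theorem intervalIntegrable_betaWeight_mul_pow (k : ℕ) :
    IntervalIntegrable (fun x : ℝ => betaWeight x * (x : ℂ) ^ k) volume 0 1 :=
  intervalIntegrable_betaWeight.mul_continuousOn (by fun_prop)

theorem intervalIntegrable_integrand (k : ℕ) {z : ℂ} (hz : z ∈ cutPlane) :
    IntervalIntegrable (integrand k z) volume 0 1 :=
  intervalIntegrable_mul_one_sub_mul_cpow (intervalIntegrable_betaWeight_mul_pow k) hz _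

theorem hasDerivAt_integral (k : ℕ) {z : ℂ} (hz : z ∈ cutPlane) :
    HasDerivAt (integral k) ((k + 1/2) * integral (k + 1) z) z := by
  refine (hasDerivAt_integral_mul_one_sub_mul_cpow
    (intervalIntegrable_betaWeight_mul_pow k) hz _).congr_deriv ?_
  simp only [integral, integrand, pow_succ, Nat.cast_succ, ← mul_assoc]
  congr 1
  · ring
  · congr 1; ext x; ring_nf

theorem integrand_zero {x : ℝ} (hx : x ∈ Icc (0:ℝ) 1) (z : ℂ) :
    integrand 0 z x = ((x : ℂ) * (1 - x) * (1 - z * x)) ^ (-(1/2 : ℂ)) := by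
  have h1 : (1 - (x : ℂ)) = ((1 - x : ℝ) : ℂ) := by push_cast; ring
  simp only [integrand, betaWeight, pow_zero, Nat.cast_zero, sub_zero, mul_one]
  rw [h1, ← ofReal_mul, ofReal_mul_cpow_of_nonneg (mul_nonneg hx.1 (by linarith [hx.2])),
    ofReal_mul, mul_cpow_ofReal_nonneg hx.1 (by linarith [hx.2])]

theorem P1_eq_integral_zero : P1 = integral 0 := by
  funext z
  refine intervalIntegral.integral_congr fun x hx => ?_
  rw [uIcc_of_le zero_le_one] at hx
  exact (integrand_zero hx z).symm

theorem deriv_P1 {z : ℂ} (hz : z ∈ cutPlane) : deriv P1 z = 1/2 * integral 1 z := by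
  rw [P1_eq_integral_zero, (hasDerivAt_integral 0 hz).deriv]
  norm_num

theorem deriv_deriv_P1 {z : ℂ} (hz : z ∈ cutPlane) :
    deriv (deriv P1) z = 3/4 * integral 2 z := by
  have hev : deriv P1 =ᶠ[nhds z] fun v => 1/2 * integral 1 v :=
    Filter.eventually_of_mem (isOpen_cutPlane.mem_nhds hz) fun v hv => deriv_P1 hv
  rw [hev.deriv_eq, ((hasDerivAt_integral 1 hz).const_mul (1/2 : ℂ)).deriv]
  norm_num
  ring

noncomputable def boundaryTerm (c : ℂ) (x : ℝ) : ℂ :=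
  -(1/2) * (x : ℂ) ^ (1/2 : ℂ) * (1 - (x : ℂ)) ^ (1/2 : ℂ) * (1 - c * x) ^ (-(3/2) : ℂ)

theorem continuousOn_boundaryTerm {c : ℂ} (hc : c ∈ cutPlane) :
    ContinuousOn (boundaryTerm c) (Icc 0 1) := by
  have hsqrt : Continuous fun x : ℝ => (x : ℂ) ^ (1/2 : ℂ) :=
    continuous_ofReal_cpow_const (by norm_num)
  have hsqrt' : Continuous fun x : ℝ => (1 - (x : ℂ)) ^ (1/2 : ℂ) :=
    (hsqrt.comp (continuous_sub_left 1)).congr fun x => by simp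
  exact (((continuous_const.mul hsqrt).mul hsqrt').continuousOn).mul
    (continuousOn_one_sub_mul_cpow hc _)

theorem hasDerivAt_boundaryTerm {c : ℂ} (hc : c ∈ cutPlane) {x : ℝ}
    (hx : x ∈ Ioo (0:ℝ) 1) :
    HasDerivAt (boundaryTerm c)
      (c * (1 - c) * (3/4 * integrand 2 c x) + (1 - 2 * c) * (1/2 * integrand 1 c x)
        - 1/4 * integrand 0 c x) x := by
  have hx0 : (x : ℂ) ∈ slitPlane := ofReal_mem_slitPlane.mpr hx.1
  have hx1 : 1 - (x : ℂ) ∈ slitPlane := by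
    rw [← ofReal_one, ← ofReal_sub, ofReal_mem_slitPlane]; linarith [hx.2]
  have hu := one_sub_mul_mem_slitPlane hc (Ioo_subset_Icc_self hx)
  have h := ((((hasDerivAt_id' (x : ℂ)).cpow_const (c := 1/2) hx0).const_mul (-(1/2) : ℂ)).mul
    (((hasDerivAt_id' (x : ℂ)).const_sub 1).cpow_const (c := 1/2) hx1)).mul
    ((((hasDerivAt_id' (x : ℂ)).const_mul c).const_sub 1).cpow_const (c := -(3/2)) hu)
  refine h.comp_ofReal.congr_deriv ?_
  have hx0' := slitPlane_ne_zero hx0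
  have hx1' := slitPlane_ne_zero hx1
  have hu' := slitPlane_ne_zero hu
  simp only [integrand, betaWeight, Pi.mul_apply]
  -- after writing every power through `x^(-1/2)`, `(1-x)^(-1/2)`, `(1-cx)^(-5/2)` the identity is
  -- polynomial
  rw [show (1/2 - 1 : ℂ) = -(1/2) by norm_num,
    show (-(3/2) - 1 : ℂ) = -(1/2) - (2 : ℕ) by push_cast; norm_num,
    cpow_eq_pow_mul_cpow hx0' 1 (show (1/2 : ℂ) = (1 : ℕ) + -(1/2) by norm_num),
    cpow_eq_pow_mul_cpow hx1' 1 (show (1/2 : ℂ) = (1 : ℕ) + -(1/2) by norm_num),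
    cpow_eq_pow_mul_cpow hu' 1
      (show (-(3/2) : ℂ) = (1 : ℕ) + (-(1/2) - (2 : ℕ)) by push_cast; norm_num),
    cpow_eq_pow_mul_cpow hu' 1
      (show (-(1/2) - (1 : ℕ) : ℂ) = (1 : ℕ) + (-(1/2) - (2 : ℕ)) by push_cast; norm_num),
    cpow_eq_pow_mul_cpow hu' 2
      (show (-(1/2) - (0 : ℕ) : ℂ) = (2 : ℕ) + (-(1/2) - (2 : ℕ)) by push_cast; norm_num)]
  ring

theorem hypergeometric_eq_zero {c : ℂ} (hc : c ∈ cutPlane) :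
    c * (1 - c) * (3/4 * integral 2 c) + (1 - 2 * c) * (1/2 * integral 1 c)
      - 1/4 * integral 0 c = 0 := by
  have hint := fun k => intervalIntegrable_integrand k hc
  have h2 := ((hint 2).const_mul (3/4)).const_mul (c * (1 - c))
  have h1 := ((hint 1).const_mul (1/2)).const_mul (1 - 2 * c)
  have h0 := (hint 0).const_mul (1/4)
  have hFTC := intervalIntegral.integral_eq_sub_of_hasDerivAt_of_le zero_le_one
    (continuousOn_boundaryTerm hc) (fun x hx => hasDerivAt_boundaryTerm hc hx) ((h2.add h1).sub h0)
  rw [intervalIntegral.integral_sub (h2.add h1) h0, intervalIntegral.integral_add h2 h1] at hFTC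
  simpa only [integral, intervalIntegral.integral_const_mul, boundaryTerm, ofReal_zero, ofReal_one,
    sub_self, zero_cpow (by norm_num : (1/2 : ℂ) ≠ 0), mul_zero, zero_mul, sub_zero] using hFTC

end Legendre

/-- For `c ∈ ℂ \ ℝ_{≥0}`, the improper integral `P₁(c)` converges and satisfies the
hypergeometric differential equation `c(1-c)P'' + (1-2c)P' - (1/4)P = 0`. -/
theorem stmt0 (c : ℂ) (hc : ∀ r : ℝ, 0 ≤ r → c ≠ (r : ℂ)) :
    IntegrableOn
      (fun x : ℝ => ((x : ℂ) * (1 - (x : ℂ)) * (1 - c * (x : ℂ))) ^ (-(1/2 : ℂ)))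
      (Set.Ioo 0 1) ∧
    c * (1 - c) * deriv (deriv P1) c + (1 - 2 * c) * deriv P1 c - (1/4) * P1 c = 0 := by
  have hc' : c ∈ cutPlane := fun ⟨r, hr, hrc⟩ => hc r (zero_le_one.trans hr) hrc.symm
  refine ⟨?_, ?_⟩
  · have h := (intervalIntegrable_iff_integrableOn_Ioo_of_le zero_le_one).mp
      (Legendre.intervalIntegrable_integrand 0 hc')
    exact h.congr_fun (fun x hx => Legendre.integrand_zero (Ioo_subset_Icc_self hx) c)
      measurableSet_Ioo
  · rw [Legendre.deriv_deriv_P1 hc', Legendre.deriv_P1 hc', Legendre.P1_eq_integral_zero]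
    exact Legendre.hypergeometric_eq_zero hc'
end

section
/- With H(a,x) = -√(x(1-x))/(2·√(1-ax)³), one has 𝒟₁(1/√(x(1-x)(1-ax))) = ∂H(a,x)/∂x, where 𝒟₁ = a(1-a)∂²/∂a² + (1-2a)∂/∂a - 1/4 acts in the variable a. -/
/-!
With `w = 1 - a x` and `q = w^{-1/2}`, every derivative involved is a monomial in `q`:
`∂ₐ q = x q³ / 2` and `∂ₐ q³ = 3 x q⁵ / 2`. Multiplying both sides by `4 √(x(1-x)) / q⁵` and using
`q² w = 1`, the identity becomes the polynomial identity
`3a(1-a)x² + 2(1-2a)x w - w² = -(1-2x) w - 3a x(1-x)`.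
-/

open Real

theorem HasDerivAt.inv_sqrt_pow {g : ℝ → ℝ} {g' s : ℝ} (hg : HasDerivAt g g' s) (hpos : 0 < g s)
    (n : ℕ) :
    HasDerivAt (fun u => (√(g u))⁻¹ ^ n) (-(n * g') / 2 * (√(g s))⁻¹ ^ (n + 2)) s := by
  have hsqrt : √(g s) ≠ 0 := (sqrt_pos.2 hpos).ne'
  refine (((hg.sqrt hpos.ne').fun_inv hsqrt).fun_pow n).congr_deriv ?_
  rcases n with _ | n
  · simp
  · simp only [inv_pow, Nat.add_sub_cancel]
    field_simp
    ring

theorem hasDerivAt_one_sub_mul_const (x s : ℝ) : HasDerivAt (fun u => 1 - u * x) (-x) s := by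
  simpa using ((hasDerivAt_id s).mul_const x).const_sub 1

theorem deriv_inv_sqrt_mul_one_sub_mul {p x s : ℝ} (hp : 0 ≤ p) (hs : 0 < 1 - s * x) :
    deriv (fun u => (√(p * (1 - u * x)))⁻¹) s = (√p)⁻¹ * (x / 2 * (√(1 - s * x))⁻¹ ^ 3) := by
  simp only [sqrt_mul hp, mul_inv]
  simpa using (((hasDerivAt_one_sub_mul_const x s).inv_sqrt_pow hs 1).const_mul (√p)⁻¹).deriv

theorem deriv_deriv_inv_sqrt_mul_one_sub_mul {p x a : ℝ} (hp : 0 ≤ p) (ha : 0 < 1 - a * x) :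
    deriv (fun s => deriv (fun u => (√(p * (1 - u * x)))⁻¹) s) a
      = (√p)⁻¹ * (3 * x ^ 2 / 4 * (√(1 - a * x))⁻¹ ^ 5) := by
  have hnear : ∀ᶠ s in nhds a, 0 < 1 - s * x :=
    (isOpen_lt continuous_const (by fun_prop)).mem_nhds ha
  rw [Filter.EventuallyEq.deriv_eq (hnear.mono fun s hs => deriv_inv_sqrt_mul_one_sub_mul hp hs)]
  have hcube :=
    (((hasDerivAt_one_sub_mul_const x a).inv_sqrt_pow ha 3).const_mul (x / 2)).const_mul (√p)⁻¹
  rw [hcube.deriv]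
  push_cast
  ring

theorem hasDerivAt_neg_sqrt_div_sqrt_cube {a x : ℝ} (hx : 0 < x * (1 - x)) (ha : 0 < 1 - a * x) :
    HasDerivAt (fun t => -(√(t * (1 - t)) / (2 * √(1 - a * t) ^ 3)))
      (-((1 - 2 * x) / (4 * √(x * (1 - x))) * (√(1 - a * x))⁻¹ ^ 3
        + 3 * a / 4 * √(x * (1 - x)) * (√(1 - a * x))⁻¹ ^ 5)) x := by
  have hP : HasDerivAt (fun t => t * (1 - t)) (1 - 2 * x) x :=
    ((hasDerivAt_id' x).fun_mul ((hasDerivAt_id' x).const_sub 1)).congr_deriv (by ring)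
  have hw : HasDerivAt (fun t => 1 - a * t) (-a) x := by
    simpa [mul_comm] using hasDerivAt_one_sub_mul_const a x
  have hfun : (fun t => -(√(t * (1 - t)) / (2 * √(1 - a * t) ^ 3)))
      = fun t => -1 / 2 * (√(t * (1 - t)) * (√(1 - a * t))⁻¹ ^ 3) := by
    funext t
    ring
  rw [hfun]
  refine (((hP.sqrt hx.ne').fun_mul (hw.inv_sqrt_pow ha 3)).const_mul (-1 / 2)).congr_deriv ?_
  push_cast
  ring

/-- With `H(a,x) = -√(x(1-x))/(2·√(1-ax)³)`, one has
`𝒟₁(1/√(x(1-x)(1-ax))) = ∂H(a,x)/∂x`, where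
`𝒟₁ = a(1-a)∂²/∂a² + (1-2a)∂/∂a - 1/4` acts in the variable `a`.
Here `x ∈ (0,1)` and `a` is such that `1 - a·t > 0` on `[0,1]`, so the positive real
square roots give fixed consistent branches. -/
theorem stmt3 (a x : ℝ) (hx0 : 0 < x) (hx1 : x < 1)
    (ha : ∀ t ∈ Set.Icc (0:ℝ) 1, 0 < 1 - a * t) :
    a * (1 - a) * deriv (fun s => deriv (fun u => (Real.sqrt (x * (1 - x) * (1 - u * x)))⁻¹) s) a
      + (1 - 2 * a) * deriv (fun u => (Real.sqrt (x * (1 - x) * (1 - u * x)))⁻¹) a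
      - (1/4) * (Real.sqrt (x * (1 - x) * (1 - a * x)))⁻¹
    = deriv (fun t => -(Real.sqrt (t * (1 - t)) / (2 * (Real.sqrt (1 - a * t))^3))) x := by
  have hw : 0 < 1 - a * x := ha x ⟨hx0.le, hx1.le⟩
  have hP : 0 < x * (1 - x) := mul_pos hx0 (sub_pos.2 hx1)
  rw [deriv_deriv_inv_sqrt_mul_one_sub_mul hP.le hw, deriv_inv_sqrt_mul_one_sub_mul hP.le hw,
    (hasDerivAt_neg_sqrt_div_sqrt_cube hP hw).deriv, sqrt_mul hP.le, mul_inv]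
  have hqw : (√(1 - a * x))⁻¹ ^ 2 * (1 - a * x) = 1 := by
    rw [inv_pow, sq_sqrt hw.le, inv_mul_cancel₀ hw.ne']
  have hPsq : √(x * (1 - x)) ^ 2 = x * (1 - x) := sq_sqrt hP.le
  have hPne : √(x * (1 - x)) ≠ 0 := (sqrt_pos.2 hP).ne'
  generalize (√(1 - a * x))⁻¹ = q at hqw ⊢
  field_simp
  linear_combination q * (6 * a * x * q ^ 2 + 2) * hqw + 6 * a * q ^ 5 * hPsq
end

section
/- Let A₀ = ℂ[c, 1/(c(c-1))]. The ring A₀[√c, √(1-c)] (i.e. A₀ adjoined square roots of c and 1-c) is isomorphic to ℂ[γ, 1/(γ(γ⁴-1))] via √c ↦ (γ + 1/γ)/2 and √(1-c) ↦ (γ - 1/γ)/(2√(-1)). -/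
instance : CharZero (RatFunc ℂ) :=
  charZero_of_injective_algebraMap (algebraMap ℂ (RatFunc ℂ)).injective

/-- The ring `A₀[√c, √(1-c)]` (with `A₀ = ℂ[c, 1/(c(c-1))]` the coordinate ring of
`S₀ = ℙ¹ ∖ {0,1,∞}`) is isomorphic to `ℂ[γ, 1/(γ(γ⁴-1))]` via
`√c ↦ (γ + 1/γ)/2` and `√(1-c) ↦ (γ - 1/γ)/(2√(-1))`.

Formalized inside the field `ℂ(γ) = RatFunc ℂ`: setting `s = (γ+1/γ)/2`,
`t = (γ-1/γ)/(2i)` and `c = s²`, one has `t² = 1 - c`, and the ℂ-subalgebra generated by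
`c, (c(c-1))⁻¹, s, t` (the image of `A₀[√c,√(1-c)]` under the asserted map) coincides with
the ℂ-subalgebra generated by `γ, (γ(γ⁴-1))⁻¹` (the coordinate ring of
`ℙ¹ ∖ {0,∞,±1,±i}`). -/
theorem stmt5 :
    (((RatFunc.X - RatFunc.X⁻¹) / (2 * RatFunc.C Complex.I))^2
        = 1 - ((RatFunc.X + RatFunc.X⁻¹) / 2)^2) ∧
    Algebra.adjoin ℂ
        ({((RatFunc.X + RatFunc.X⁻¹) / 2)^2,
          (((RatFunc.X + RatFunc.X⁻¹) / 2)^2 * (((RatFunc.X + RatFunc.X⁻¹) / 2)^2 - 1))⁻¹,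
          (RatFunc.X + RatFunc.X⁻¹) / 2,
          (RatFunc.X - RatFunc.X⁻¹) / (2 * RatFunc.C Complex.I)} : Set (RatFunc ℂ))
      = Algebra.adjoin ℂ
          ({RatFunc.X, (RatFunc.X * (RatFunc.X^4 - 1))⁻¹} : Set (RatFunc ℂ)) := by
  have hx : (RatFunc.X : RatFunc ℂ) ≠ 0 := RatFunc.X_ne_zero
  have hI : (RatFunc.C Complex.I : RatFunc ℂ) ≠ 0 := by
    simp [Complex.I_ne_zero]
  have hxy : (RatFunc.X : RatFunc ℂ) * RatFunc.X⁻¹ = 1 := mul_inv_cancel₀ hx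
  have hII : (RatFunc.C Complex.I : RatFunc ℂ) * RatFunc.C Complex.I = -1 := by
    rw [← map_mul, Complex.I_mul_I, map_neg, map_one]
  have h2I : ((2 : RatFunc ℂ) * RatFunc.C Complex.I) * (2 * RatFunc.C Complex.I) = -4 := by
    rw [show ((2 : RatFunc ℂ) * RatFunc.C Complex.I) * (2 * RatFunc.C Complex.I)
        = 4 * (RatFunc.C Complex.I * RatFunc.C Complex.I) by ring, hII]; ring
  have hm : ((2 : RatFunc ℂ) * RatFunc.C Complex.I)⁻¹ * (2 * RatFunc.C Complex.I)⁻¹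
      = -(4 : RatFunc ℂ)⁻¹ := by
    rw [← mul_inv, h2I]
    norm_num
  have hmj : RatFunc.C Complex.I * ((2 : RatFunc ℂ) * RatFunc.C Complex.I)⁻¹
      = (2 : RatFunc ℂ)⁻¹ := by
    rw [mul_inv, mul_comm ((2:RatFunc ℂ))⁻¹, ← mul_assoc, mul_inv_cancel₀ hI, one_mul]
  have h4 : (RatFunc.X : RatFunc ℂ)^4 - 1 ≠ 0 := by
    have h : ((RatFunc.X : RatFunc ℂ)^4 - 1)
        = algebraMap (Polynomial ℂ) (RatFunc ℂ) (Polynomial.X^4 - 1) := by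
      simp [RatFunc.algebraMap_X]
    rw [h]
    apply RatFunc.algebraMap_ne_zero
    intro hp
    have := Polynomial.X_pow_sub_C_ne_zero (n := 4) (by norm_num) (1 : ℂ)
    simp [Polynomial.C_1] at this
    exact this hp
  have hu : ((RatFunc.X : RatFunc ℂ) * (RatFunc.X^4 - 1))
      * (RatFunc.X * (RatFunc.X^4 - 1))⁻¹ = 1 :=
    mul_inv_cancel₀ (mul_ne_zero hx h4)
  have he : ((RatFunc.X : RatFunc ℂ)^4 - 1)^2 * (((RatFunc.X : RatFunc ℂ)^4 - 1)^2)⁻¹ = 1 :=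
    mul_inv_cancel₀ (pow_ne_zero 2 h4)
  -- the square-root relation
  have ht2 : ((RatFunc.X - RatFunc.X⁻¹) / (2 * RatFunc.C Complex.I))^2
      = 1 - ((RatFunc.X + RatFunc.X⁻¹) / 2)^2 := by
    linear_combination hxy + ((RatFunc.X - RatFunc.X⁻¹)^2) * hm
  -- value of c(c-1)
  have h16 : (16 : RatFunc ℂ) * RatFunc.X^4 ≠ 0 := by
    apply mul_ne_zero _ (pow_ne_zero 4 hx)
    norm_num
  have hvv : ((RatFunc.X + RatFunc.X⁻¹) / 2)^2 * (((RatFunc.X + RatFunc.X⁻¹) / 2)^2 - 1)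
      = ((RatFunc.X : RatFunc ℂ)^4 - 1)^2 / (16 * RatFunc.X^4) := by
    rw [eq_div_iff h16]
    linear_combination ((1:RatFunc ℂ) + RatFunc.X*RatFunc.X⁻¹
      + (RatFunc.X*RatFunc.X⁻¹)^2 + (RatFunc.X*RatFunc.X⁻¹)^3
      - 2*RatFunc.X^4 + 4*RatFunc.X^4*RatFunc.X⁻¹^2
      + 6*RatFunc.X^5*RatFunc.X⁻¹ + 4*RatFunc.X^6) * hxy
  have hv : (((RatFunc.X + RatFunc.X⁻¹) / 2)^2
        * (((RatFunc.X + RatFunc.X⁻¹) / 2)^2 - 1))⁻¹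
      = 16 * (RatFunc.X : RatFunc ℂ)^4 / ((RatFunc.X : RatFunc ℂ)^4 - 1)^2 := by
    rw [hvv, inv_div]
  have hxinv : (RatFunc.X : RatFunc ℂ)⁻¹
      = (RatFunc.X + RatFunc.X⁻¹) / 2
        - RatFunc.C Complex.I * ((RatFunc.X - RatFunc.X⁻¹) / (2 * RatFunc.C Complex.I)) := by
    linear_combination ((RatFunc.X - RatFunc.X⁻¹)) * hmj
  have hxeq : (RatFunc.X : RatFunc ℂ)
      = (RatFunc.X + RatFunc.X⁻¹) / 2
        + RatFunc.C Complex.I * ((RatFunc.X - RatFunc.X⁻¹) / (2 * RatFunc.C Complex.I)) := by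
    linear_combination (-(RatFunc.X - RatFunc.X⁻¹)) * hmj
  refine ⟨ht2, le_antisymm (Algebra.adjoin_le ?_) (Algebra.adjoin_le ?_)⟩
  · -- LHS generators lie in RHS adjoin
    set B := Algebra.adjoin ℂ ({RatFunc.X, (RatFunc.X * (RatFunc.X^4 - 1))⁻¹}
        : Set (RatFunc ℂ)) with hB
    have hxB : (RatFunc.X : RatFunc ℂ) ∈ B := Algebra.subset_adjoin (by simp)
    have huB : ((RatFunc.X : RatFunc ℂ) * (RatFunc.X^4 - 1))⁻¹ ∈ B :=
      Algebra.subset_adjoin (by simp)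
    have hxiB : (RatFunc.X : RatFunc ℂ)⁻¹ ∈ B := by
      have h : (RatFunc.X : RatFunc ℂ)⁻¹
          = (RatFunc.X * (RatFunc.X^4 - 1))⁻¹ * (RatFunc.X^4 - 1) := by
        rw [mul_inv, mul_assoc, inv_mul_cancel₀ h4, mul_one]
      rw [h]
      exact B.mul_mem huB (B.sub_mem (B.pow_mem hxB 4) B.one_mem)
    have hsB : (RatFunc.X + RatFunc.X⁻¹) / 2 ∈ B := by
      have h : (RatFunc.X + RatFunc.X⁻¹) / 2
          = algebraMap ℂ (RatFunc ℂ) (2⁻¹) * (RatFunc.X + RatFunc.X⁻¹) := by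
        rw [RatFunc.algebraMap_eq_C, map_inv₀, map_ofNat]
        ring
      rw [h]
      exact B.mul_mem (B.algebraMap_mem _) (B.add_mem hxB hxiB)
    have htB : (RatFunc.X - RatFunc.X⁻¹) / (2 * RatFunc.C Complex.I) ∈ B := by
      have h : (RatFunc.X - RatFunc.X⁻¹) / (2 * RatFunc.C Complex.I)
          = algebraMap ℂ (RatFunc ℂ) ((2 * Complex.I)⁻¹) * (RatFunc.X - RatFunc.X⁻¹) := by
        rw [RatFunc.algebraMap_eq_C, map_inv₀, map_mul, map_ofNat]
        ring
      rw [h]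
      exact B.mul_mem (B.algebraMap_mem _) (B.sub_mem hxB hxiB)
    have hvB : (((RatFunc.X + RatFunc.X⁻¹) / 2)^2
        * (((RatFunc.X + RatFunc.X⁻¹) / 2)^2 - 1))⁻¹ ∈ B := by
      have h : (((RatFunc.X + RatFunc.X⁻¹) / 2)^2
            * (((RatFunc.X + RatFunc.X⁻¹) / 2)^2 - 1))⁻¹
          = algebraMap ℂ (RatFunc ℂ) 16 * RatFunc.X^6
            * ((RatFunc.X * (RatFunc.X^4 - 1))⁻¹)^2 := by
        rw [hv, RatFunc.algebraMap_eq_C, map_ofNat, div_eq_iff (pow_ne_zero 2 h4)]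
        linear_combination (-(16:RatFunc ℂ) * RatFunc.X^4
          * (RatFunc.X * (RatFunc.X^4 - 1) * (RatFunc.X * (RatFunc.X^4 - 1))⁻¹ + 1)) * hu
      rw [h]
      exact B.mul_mem (B.mul_mem (B.algebraMap_mem _) (B.pow_mem hxB 6)) (B.pow_mem huB 2)
    rintro y (rfl | rfl | rfl | rfl)
    · exact B.pow_mem hsB 2
    · exact hvB
    · exact hsB
    · exact htB
  · -- RHS generators lie in LHS adjoin
    set A := Algebra.adjoin ℂ
        ({((RatFunc.X + RatFunc.X⁻¹) / 2)^2,
          (((RatFunc.X + RatFunc.X⁻¹) / 2)^2 * (((RatFunc.X + RatFunc.X⁻¹) / 2)^2 - 1))⁻¹,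
          (RatFunc.X + RatFunc.X⁻¹) / 2,
          (RatFunc.X - RatFunc.X⁻¹) / (2 * RatFunc.C Complex.I)} : Set (RatFunc ℂ)) with hA
    have hsA : (RatFunc.X + RatFunc.X⁻¹) / 2 ∈ A := Algebra.subset_adjoin (by simp)
    have htA : (RatFunc.X - RatFunc.X⁻¹) / (2 * RatFunc.C Complex.I) ∈ A :=
      Algebra.subset_adjoin (by simp)
    have hvA : (((RatFunc.X + RatFunc.X⁻¹) / 2)^2
        * (((RatFunc.X + RatFunc.X⁻¹) / 2)^2 - 1))⁻¹ ∈ A := Algebra.subset_adjoin (by simp)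
    have hCI : (RatFunc.C Complex.I : RatFunc ℂ) ∈ A := by
      rw [← RatFunc.algebraMap_eq_C]
      exact A.algebraMap_mem _
    have hxA : (RatFunc.X : RatFunc ℂ) ∈ A := by
      rw [hxeq]; exact A.add_mem hsA (A.mul_mem hCI htA)
    have hxiA : (RatFunc.X : RatFunc ℂ)⁻¹ ∈ A := by
      rw [hxinv]; exact A.sub_mem hsA (A.mul_mem hCI htA)
    have huA : ((RatFunc.X : RatFunc ℂ) * (RatFunc.X^4 - 1))⁻¹ ∈ A := by
      have key : ((RatFunc.X : RatFunc ℂ) * (RatFunc.X^4 - 1))⁻¹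
          = algebraMap ℂ (RatFunc ℂ) (16⁻¹) * (RatFunc.X⁻¹ - (RatFunc.X⁻¹)^5)
            * (((RatFunc.X + RatFunc.X⁻¹) / 2)^2
                * (((RatFunc.X + RatFunc.X⁻¹) / 2)^2 - 1))⁻¹ := by
        apply inv_eq_of_mul_eq_one_right
        rw [RatFunc.algebraMap_eq_C, map_inv₀, map_ofNat, hv, div_eq_mul_inv]
        linear_combination he + ((RatFunc.X^4 - 1) * ((RatFunc.X^4 - 1)^2)⁻¹
          * (RatFunc.X^4 - ((RatFunc.X*RatFunc.X⁻¹)^4 + (RatFunc.X*RatFunc.X⁻¹)^3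
              + (RatFunc.X*RatFunc.X⁻¹)^2 + RatFunc.X*RatFunc.X⁻¹ + 1))) * hxy
      rw [key]
      exact A.mul_mem (A.mul_mem (A.algebraMap_mem _)
        (A.sub_mem hxiA (A.pow_mem hxiA 5))) hvA
    rintro y (rfl | rfl)
    · exact hxA
    · exact huA
end

section
/- Let G be a group acting on a scheme X and let χ: G → Γ(X, 𝒪_X^×) satisfy the 1-cocycle condition χ(gh) = h^♯(χ(g))·χ(h). Let π: Y → X be the degree m cyclic covering associated with a G-linearized line bundle ℒ and a section s ∈ Γ(X, ℒ^⊗(-m)) with Φ_g^⊗(-m)(g^*s) = χ(g)^{-m}·s for all g ∈ G. Then there is a G-action on Y making π G-equivariant. -/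
/-!
On `A[t]/(t^m - s)` the lift of `g` acts as `g^♯` on `A` and sends `t` to `w(g) t`, where
`w = u / χ` is the cocycle of the linearization twisted by `χ⁻¹`. The relation `t^m = s` is
preserved because the hypothesis on `s` reads `w(g)^m s = g^♯ s`, and the cocycle identity for
`w` gives the composition law; `g⁻¹` provides the inverse of each lift.
-/

open Polynomial

section Cocycle

variable {A G : Type*} [CommRing A] [Group G]

def IsRightCocycle (σ : G → RingAut A) (c : G → Aˣ) : Prop :=
  ∀ g h : G, (c (g * h) : A) = σ h (c g) * c h

lemma ringAut_map_one_of_antimul {σ : G → RingAut A}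
    (hσ : ∀ g h : G, ∀ a : A, σ (g * h) a = σ h (σ g a)) : σ 1 = 1 := by
  have h : σ 1 * σ 1 = σ 1 := by
    ext a
    simpa using (hσ 1 1 a).symm
  exact mul_eq_right.mp h

namespace IsRightCocycle

variable {σ : G → RingAut A}

lemma map_one {c : G → Aˣ} (hc : IsRightCocycle σ c) (hσ1 : σ 1 = 1) : c 1 = 1 := by
  have h : c 1 * c 1 = c 1 := Units.ext (by simpa [hσ1] using (hc 1 1).symm)
  exact mul_eq_right.mp h

lemma div {u χ : G → Aˣ} (hu : IsRightCocycle σ u) (hχ : IsRightCocycle σ χ) :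
    IsRightCocycle σ (u / χ) := by
  intro g h
  let σₕ : Aˣ →* Aˣ := Units.map (σ h : A →* A)
  have hu' : u (g * h) = σₕ (u g) * u h := Units.ext (hu g h)
  have hχ' : χ (g * h) = σₕ (χ g) * χ h := Units.ext (hχ g h)
  change ((u (g * h) / χ (g * h) : Aˣ) : A) = (σₕ (u g / χ g) : A) * (u h / χ h : Aˣ)
  rw [hu', hχ', _root_.map_div, mul_div_mul_comm, Units.val_mul]

end IsRightCocycle

end Cocycle

section TwistedLift

variable {A : Type*} [CommRing A] {m : ℕ} {s : A}

lemma AdjoinRoot.root_X_pow_sub_C_pow :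
    AdjoinRoot.root (X ^ m - C s) ^ m = AdjoinRoot.of _ s := by
  rw [← sub_eq_zero, ← AdjoinRoot.eval₂_root, eval₂_sub, eval₂_C, eval₂_pow, eval₂_X]

noncomputable def twistedLift (f : A →+* A) (w : A) (hw : w ^ m * s = f s) :
    AdjoinRoot (X ^ m - C s) →+* AdjoinRoot (X ^ m - C s) :=
  AdjoinRoot.lift ((AdjoinRoot.of _).comp f) (AdjoinRoot.of _ w * AdjoinRoot.root _) (by
    simp [mul_pow, AdjoinRoot.root_X_pow_sub_C_pow, ← map_pow, ← map_mul, hw])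

variable {f : A →+* A} {w : A} {hw : w ^ m * s = f s}

@[simp]
lemma twistedLift_of (a : A) : twistedLift f w hw (AdjoinRoot.of _ a) = AdjoinRoot.of _ (f a) :=
  AdjoinRoot.lift_of _

@[simp]
lemma twistedLift_root :
    twistedLift f w hw (AdjoinRoot.root _) = AdjoinRoot.of _ w * AdjoinRoot.root _ :=
  AdjoinRoot.lift_root _

lemma twistedLift_comp {f₁ f₂ f₃ : A →+* A} {w₁ w₂ w₃ : A} (h₁ : w₁ ^ m * s = f₁ s)
    (h₂ : w₂ ^ m * s = f₂ s) (h₃ : w₃ ^ m * s = f₃ s) (hf : ∀ a, f₃ a = f₂ (f₁ a))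
    (hw : w₃ = f₂ w₁ * w₂) :
    (twistedLift f₂ w₂ h₂).comp (twistedLift f₁ w₁ h₁) = twistedLift f₃ w₃ h₃ := by
  ext a
  · simp [hf]
  · simp [hw, mul_assoc]

lemma twistedLift_eq_id (hf : ∀ a, f a = a) (hw1 : w = 1) :
    twistedLift f w hw = RingHom.id _ := by
  ext a
  · simp [hf]
  · simp [hw1]

end TwistedLift

lemma exists_ringAut_of_antimul {G R : Type*} [Group G] [Semiring R] (φ : G → R →+* R)
    (hone : φ 1 = RingHom.id R) (hmul : ∀ g h, φ (g * h) = (φ h).comp (φ g)) :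
    ∃ τ : G → RingAut R, ∀ g x, τ g x = φ g x :=
  ⟨fun g => RingEquiv.ofRingHom (φ g) (φ g⁻¹) (by rw [← hmul, inv_mul_cancel, hone])
    (by rw [← hmul, mul_inv_cancel, hone]), fun _ _ => rfl⟩

theorem stmt9_general (A : Type*) [CommRing A] (G : Type*) [Group G]
    (σ : G → RingAut A) (hσ : ∀ g h : G, ∀ a : A, σ (g * h) a = σ h (σ g a))
    (m : ℕ)
    (u χ : G → Aˣ)
    (hu : ∀ g h : G, (u (g * h) : A) = σ h (u g) * (u h : A))
    (hχ : ∀ g h : G, (χ (g * h) : A) = σ h (χ g) * (χ h : A))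
    (s : A)
    (hs : ∀ g : G, (χ g : A)^m * σ g s = (u g : A)^m * s) :
    ∃ τ : G → RingAut (AdjoinRoot (Polynomial.X ^ m - Polynomial.C s)),
      (∀ g h : G, ∀ x, τ (g * h) x = τ h (τ g x)) ∧
      (∀ g : G, ∀ a : A,
        τ g (algebraMap A (AdjoinRoot (Polynomial.X ^ m - Polynomial.C s)) a)
          = algebraMap A (AdjoinRoot (Polynomial.X ^ m - Polynomial.C s)) (σ g a)) := by
  have hσ1 := ringAut_map_one_of_antimul hσ
  have hw : IsRightCocycle σ (u / χ) := IsRightCocycle.div hu hχ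
  have hws (g : G) : ((u / χ) g : A) ^ m * s = σ g s :=
    calc ((u / χ) g : A) ^ m * s = ((χ g)⁻¹ : Aˣ) ^ m * ((u g : A) ^ m * s) := by
          rw [Pi.div_apply, div_eq_mul_inv, Units.val_mul, mul_pow]
          ring
      _ = σ g s := by rw [← hs g, ← mul_assoc, ← mul_pow, Units.inv_mul, one_pow, one_mul]
  let φ (g : G) := twistedLift (σ g : A →+* A) _ (hws g)
  have hφ (g h : G) : φ (g * h) = (φ h).comp (φ g) :=
    (twistedLift_comp (hws g) (hws h) (hws (g * h)) (hσ g h) (hw g h)).symm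
  obtain ⟨τ, hτ⟩ := exists_ringAut_of_antimul φ
    (twistedLift_eq_id (by simp [hσ1]) (by simp [hw.map_one hσ1])) hφ
  refine ⟨τ, fun g h x => ?_, fun g a => (hτ g _).trans (twistedLift_of a)⟩
  rw [hτ, hτ, hτ, hφ, RingHom.comp_apply]

/-- Lifting a group action along a cyclic covering (affine model, trivialized line bundle):
`G` acts on `X = Spec A` on the left, i.e. it acts on `A` on the right by ring
automorphisms `σ g = g^♯` (so `σ(gh) = σ(h) ∘ σ(g)` as pullbacks).  The `G`-linearization
of `ℒ` is given by a 1-cocycle `u : G → A^×` and `χ : G → A^×` is a 1-cocycle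
(`χ(gh) = h^♯(χ(g))·χ(h)`).  The section `s ∈ Γ(X, ℒ^{⊗(-m)})` satisfies
`Φ_g^{⊗(-m)}(g^* s) = χ(g)^{-m}·s`, i.e. `χ(g)^m · g^♯(s) = u(g)^m · s`.
Then the degree-`m` cyclic covering `Y = Spec A[t]/(t^m - s)` carries a `G`-action
making `π : Y → X` `G`-equivariant. -/
theorem stmt9 (A : Type*) [CommRing A] (G : Type*) [Group G]
    (σ : G → RingAut A) (hσ : ∀ g h : G, ∀ a : A, σ (g * h) a = σ h (σ g a))
    (m : ℕ) (hm : 0 < m)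
    (u χ : G → Aˣ)
    (hu : ∀ g h : G, (u (g * h) : A) = σ h (u g) * (u h : A))
    (hχ : ∀ g h : G, (χ (g * h) : A) = σ h (χ g) * (χ h : A))
    (s : A)
    (hs : ∀ g : G, (χ g : A)^m * σ g s = (u g : A)^m * s) :
    ∃ τ : G → RingAut (AdjoinRoot (Polynomial.X ^ m - Polynomial.C s)),
      (∀ g h : G, ∀ x, τ (g * h) x = τ h (τ g x)) ∧
      (∀ g : G, ∀ a : A,
        τ g (algebraMap A (AdjoinRoot (Polynomial.X ^ m - Polynomial.C s)) a)
          = algebraMap A (AdjoinRoot (Polynomial.X ^ m - Polynomial.C s)) (σ g a)) :=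
  stmt9_general A G σ hσ m u χ hu hχ s hs
end
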